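/- arXiv:1703.07419 — 3 statements merged into one kernel-verified Lean document; each statement's English description precedes it below -/
import Mathlib

section
/- Let S ⊆ ℝ^L be a nonempty, compact, convex set and let λ̄ : ℝ^L → ℝ^L satisfy the monotonicity condition on S. If B* ∈ S maximizes x ↦ ⟨x, λ̄(B*)⟩ over S and B̂ ∈ S maximizes x ↦ ⟨x, λ̄(B̂)⟩ over S, then B* = B̂; that is, the equilibrium point is unique. (Uniqueness part of the paper's proof of Lemma 2 / Lemma on the replicator equilibrium.) -/
/-!
Adding the two equilibrium inequalities `⟨B̂ - B*, λ̄(B*)⟩ ≤ 0` and `⟨B* - B̂, λ̄(B̂)⟩ ≤ 0` gives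
`⟨B* - B̂, λ̄(B*) - λ̄(B̂)⟩ ≥ 0`, which the monotonicity condition forbids unless `B* = B̂`.
-/

section Equilibrium

variable {ι R : Type*} [Fintype ι] [CommRing R]

theorem sub_dotProduct_sub_eq_add (a b u v : ι → R) :
    (a - b) ⬝ᵥ (u - v) = (a ⬝ᵥ u - b ⬝ᵥ u) + (b ⬝ᵥ v - a ⬝ᵥ v) := by
  simp only [sub_dotProduct, dotProduct_sub]
  abel

def IsEquilibrium [LE R] (S : Set (ι → R)) (F : (ι → R) → ι → R) (B : ι → R) : Prop :=
  B ∈ S ∧ ∀ x ∈ S, x ⬝ᵥ F B ≤ B ⬝ᵥ F B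

theorem IsEquilibrium.eq [PartialOrder R] [IsOrderedAddMonoid R] {S : Set (ι → R)}
    {F : (ι → R) → ι → R}
    (hF : ∀ B ∈ S, ∀ B' ∈ S, B ≠ B' → (B - B') ⬝ᵥ (F B - F B') < 0)
    {B B' : ι → R} (hB : IsEquilibrium S F B) (hB' : IsEquilibrium S F B') : B = B' := by
  by_contra hne
  have hneg := hF B hB.1 B' hB'.1 hne
  rw [sub_dotProduct_sub_eq_add] at hneg
  exact hneg.not_ge <| add_nonneg (sub_nonneg.2 (hB.2 B' hB'.1)) (sub_nonneg.2 (hB'.2 B hB.1))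

end Equilibrium

theorem equilibrium_unique_general
    (L : ℕ) (S : Set (Fin L → ℝ))
    (lam : (Fin L → ℝ) → (Fin L → ℝ))
    (hmono : ∀ B ∈ S, ∀ Bh ∈ S, B ≠ Bh →
      ∑ i, (B i - Bh i) * (lam B i - lam Bh i) < 0)
    (Bstar Bhat : Fin L → ℝ) (hBstar : Bstar ∈ S) (hBhat : Bhat ∈ S)
    (hmaxstar : ∀ x ∈ S, ∑ i, x i * lam Bstar i ≤ ∑ i, Bstar i * lam Bstar i)
    (hmaxhat : ∀ x ∈ S, ∑ i, x i * lam Bhat i ≤ ∑ i, Bhat i * lam Bhat i) :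
    Bstar = Bhat :=
  IsEquilibrium.eq hmono ⟨hBstar, hmaxstar⟩ ⟨hBhat, hmaxhat⟩

/-- Uniqueness of the equilibrium point under the monotonicity condition
`⟨B − B̂, λ̄(B) − λ̄(B̂)⟩ < 0` for all `B ≠ B̂` in `S`. -/
theorem equilibrium_unique
    (L : ℕ) (S : Set (Fin L → ℝ)) (hS : S.Nonempty) (hSc : IsCompact S)
    (hSconv : Convex ℝ S)
    (lam : (Fin L → ℝ) → (Fin L → ℝ))
    (hmono : ∀ B ∈ S, ∀ Bh ∈ S, B ≠ Bh →
      ∑ i, (B i - Bh i) * (lam B i - lam Bh i) < 0)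
    (Bstar Bhat : Fin L → ℝ) (hBstar : Bstar ∈ S) (hBhat : Bhat ∈ S)
    (hmaxstar : ∀ x ∈ S, ∑ i, x i * lam Bstar i ≤ ∑ i, Bstar i * lam Bstar i)
    (hmaxhat : ∀ x ∈ S, ∑ i, x i * lam Bhat i ≤ ∑ i, Bhat i * lam Bhat i) :
    Bstar = Bhat :=
  equilibrium_unique_general L S lam hmono Bstar Bhat hBstar hBhat hmaxstar hmaxhat
end

section
/- Let S denote the unit simplex {x ∈ ℝ^L : x_ℓ ≥ 0 for all ℓ, Σ_ℓ x_ℓ = 1}. Let λ̄ : ℝ^L → ℝ^L be continuous on S and satisfy the monotonicity condition on S, and let B* ∈ S be the equilibrium, i.e., ⟨x, λ̄(B*)⟩ ≤ ⟨B*, λ̄(B*)⟩ for all x ∈ S. Let B : [0,∞) → ℝ^L be continuously differentiable, satisfy the replicator equation B_ℓ'(t) = B_ℓ(t)·(λ̄_ℓ(B(t)) − Σ_k λ̄_k(B(t)) B_k(t)) for all t ≥ 0 and all ℓ, and satisfy B(t) ∈ S and B_ℓ(t) > 0 for all t ≥ 0 and all ℓ. Then B(t) → B* as t → ∞. (This is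 the paper's Lemma 2: solutions of the replicator ODE starting in the interior of the simplex converge to the unique equilibrium point B*.) -/
/-!
The relative entropy `V(t) = ∑ᵢ B*ᵢ (log B*ᵢ - log Bᵢ(t))` is a Lyapunov function: along the
replicator flow `V' = ⟨B - B*, λ̄(B)⟩`, which by monotonicity and the equilibrium inequality is
negative away from `B*`, and `V` is bounded below. The velocity is bounded on the simplex, so a
trajectory that is `ε`-far from `B*` at arbitrarily late times stays `ε/2`-far for a fixed time
`τ` after each of them; there `V' ≤ -δ` by compactness, so `V` would decrease without bound.
-/

open Set Filter Topology Real

theorem sub_le_mul_sub_of_hasDerivWithinAt_Ici {f f' : ℝ → ℝ} {a b C : ℝ} (ha : 0 ≤ a)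
    (hab : a ≤ b) (hf : ∀ t ∈ Ici (0 : ℝ), HasDerivWithinAt f (f' t) (Ici 0) t)
    (hle : ∀ t ∈ Ioo a b, f' t ≤ C) :
    f b - f a ≤ C * (b - a) := by
  have hsub : Icc a b ⊆ Ici 0 := fun t ht => ha.trans ht.1
  have hderiv : ∀ t ∈ Ioo a b, HasDerivAt f (f' t) t := fun t ht =>
    (hf t (hsub (Ioo_subset_Icc_self ht))).hasDerivAt (Ici_mem_nhds (ha.trans_lt ht.1))
  refine (convex_Icc a b).image_sub_le_mul_sub_of_deriv_le
    (fun t ht => (hf t (hsub ht)).continuousWithinAt.mono hsub) ?_ ?_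
    a (left_mem_Icc.2 hab) b (right_mem_Icc.2 hab) hab <;> rw [interior_Icc]
  · exact fun t ht => (hderiv t ht).differentiableAt.differentiableWithinAt
  · exact fun t ht => (hderiv t ht).deriv ▸ hle t ht

theorem IsCompact.exists_pos_forall_le_neg_of_le_dist {X : Type*} [PseudoMetricSpace X]
    {K : Set X} (hK : IsCompact K) {F : X → ℝ} (hF : ContinuousOn F K) {x₀ : X}
    (hF_neg : ∀ x ∈ K, x ≠ x₀ → F x < 0) {r : ℝ} (hr : 0 < r) :
    ∃ δ > 0, ∀ x ∈ K, r ≤ dist x x₀ → F x ≤ -δ := by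
  set K' := K ∩ {x | r ≤ dist x x₀}
  rcases K'.eq_empty_or_nonempty with hempty | hne
  · refine ⟨1, one_pos, fun x hx hxr => ?_⟩
    exact absurd (hempty ▸ (⟨hx, hxr⟩ : x ∈ K')) (notMem_empty x)
  have hK' : IsCompact K' :=
    hK.inter_right (isClosed_le continuous_const (continuous_id.dist continuous_const))
  obtain ⟨z, ⟨hzK, hzr⟩, hmax⟩ := hK'.exists_isMaxOn hne (hF.mono inter_subset_left)
  have hz : z ≠ x₀ := by rintro rfl; simp only [mem_ofPred_eq, dist_self] at hzr; linarith
  exact ⟨-F z, by linarith [hF_neg z hzK hz], fun x hx hxr => by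
    linarith [show F x ≤ F z from hmax ⟨hx, hxr⟩]⟩

theorem AntitoneOn.not_bddBelow_of_frequently_drop {V : ℝ → ℝ} (hV : AntitoneOn V (Ici 0))
    {τ η : ℝ} (hτ : 0 ≤ τ) (hη : 0 < η)
    (hdrop : ∀ T ≥ 0, ∃ a ≥ T, V (a + τ) ≤ V a - η) : ¬BddBelow (V '' Ici 0) := by
  have hiter : ∀ n : ℕ, ∃ t ≥ 0, V t ≤ V 0 - n * η := by
    intro n
    induction n with
    | zero => exact ⟨0, le_rfl, by simp⟩
    | succ n ih =>
      obtain ⟨t, ht, hVt⟩ := ih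
      obtain ⟨a, hat, hVa⟩ := hdrop t ht
      refine ⟨a + τ, by linarith, ?_⟩
      have := hV ht (ht.trans hat : (0 : ℝ) ≤ a) hat
      push_cast
      linarith
  rintro ⟨m, hm⟩
  obtain ⟨n, hn⟩ := exists_nat_gt ((V 0 - m) / η)
  obtain ⟨t, ht, hVt⟩ := hiter n
  have := hm ⟨t, ht, rfl⟩
  rw [div_lt_iff₀ hη] at hn
  linarith

theorem tendsto_of_hasDerivWithinAt_lyapunov {X : Type*} [PseudoMetricSpace X] {K : Set X}
    (hK : IsCompact K) {F : X → ℝ} (hF : ContinuousOn F K) {x₀ : X} (hFx₀ : F x₀ ≤ 0)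
    (hF_neg : ∀ x ∈ K, x ≠ x₀ → F x < 0) {g : ℝ → X} (hgK : ∀ t ∈ Ici (0 : ℝ), g t ∈ K)
    (hg : UniformContinuousOn g (Ici 0)) {V : ℝ → ℝ}
    (hV : ∀ t ∈ Ici (0 : ℝ), HasDerivWithinAt V (F (g t)) (Ici 0) t)
    (hV_bdd : BddBelow (V '' Ici 0)) : Tendsto g atTop (𝓝 x₀) := by
  rw [Metric.tendsto_atTop]
  by_contra! hfar
  obtain ⟨ε, hε, hfar⟩ := hfar
  obtain ⟨δ, hδ, hFδ⟩ := hK.exists_pos_forall_le_neg_of_le_dist hF hF_neg (half_pos hε)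
  obtain ⟨τ, hτ, hgτ⟩ := Metric.uniformContinuousOn_iff.1 hg (ε / 2) (half_pos hε)
  have hF_nonpos : ∀ t ∈ Ici (0 : ℝ), F (g t) ≤ 0 := fun t ht => by
    rcases eq_or_ne (g t) x₀ with h | h
    · exact h ▸ hFx₀
    · exact (hF_neg _ (hgK t ht) h).le
  have hanti : AntitoneOn V (Ici 0) := fun a ha b _ hab => by
    have := sub_le_mul_sub_of_hasDerivWithinAt_Ici ha hab hV
      (fun t ht => hF_nonpos t (mem_Ici.2 (ha.trans ht.1.le)))
    linarith
  refine hanti.not_bddBelow_of_frequently_drop (half_pos hτ).le (mul_pos hδ (half_pos hτ))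
    (fun T hT => ?_) hV_bdd
  obtain ⟨a, haT, hfar_a⟩ := hfar T
  have ha : 0 ≤ a := hT.trans haT
  -- `g t` is `ε / 2`-close to `g a`, hence `ε / 2`-far from `x₀`
  have hstay : ∀ t ∈ Ioo a (a + τ / 2), F (g t) ≤ -δ := fun t ht => by
    have ht0 : t ∈ Ici (0 : ℝ) := mem_Ici.2 (ha.trans ht.1.le)
    have hclose := hgτ t ht0 a ha (by
      rw [Real.dist_eq, abs_of_pos (sub_pos.2 ht.1)]; linarith [ht.2])
    refine hFδ _ (hgK t ht0) ?_
    linarith [dist_triangle_left (g a) x₀ (g t)]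
  refine ⟨a, haT, ?_⟩
  have := sub_le_mul_sub_of_hasDerivWithinAt_Ici ha (by linarith) hV hstay
  linarith

theorem uniformContinuousOn_of_hasDerivWithinAt_of_norm_le {E : Type*} [NormedAddCommGroup E]
    [NormedSpace ℝ E] {s : Set ℝ} (hs : Convex ℝ s) {f f' : ℝ → E} {C : ℝ}
    (hf : ∀ t ∈ s, HasDerivWithinAt f (f' t) s t) (hC : ∀ t ∈ s, ‖f' t‖ ≤ C) :
    UniformContinuousOn f s :=
  (hs.lipschitzOnWith_of_nnnorm_hasDerivWithin_le (C := C.toNNReal) hf fun t ht => by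
    rw [← norm_toNNReal]; exact Real.toNNReal_le_toNNReal (hC t ht)).uniformContinuousOn

section Replicator

variable {ι : Type*} [Fintype ι]

def replicatorField (lam : (ι → ℝ) → ι → ℝ) (x : ι → ℝ) : ι → ℝ :=
  fun ℓ => x ℓ * (lam x ℓ - ∑ k, lam x k * x k)

noncomputable def relativeEntropy (p q : ι → ℝ) : ℝ := ∑ i, p i * (log (p i) - log (q i))

theorem abs_sum_mul_le_of_mem_stdSimplex {v x : ι → ℝ} (hx : x ∈ stdSimplex ℝ ι) {M : ℝ}
    (hv : ∀ i, |v i| ≤ M) : |∑ i, v i * x i| ≤ M :=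
  calc |∑ i, v i * x i| ≤ ∑ i, |v i| * x i := by
        refine (Finset.abs_sum_le_sum_abs _ _).trans_eq (Finset.sum_congr rfl fun i _ => ?_)
        rw [abs_mul, abs_of_nonneg (hx.1 i)]
    _ ≤ ∑ i, M * x i := Finset.sum_le_sum fun i _ => mul_le_mul_of_nonneg_right (hv i) (hx.1 i)
    _ = M := by rw [← Finset.mul_sum, hx.2, mul_one]

theorem norm_replicatorField_le {lam : (ι → ℝ) → ι → ℝ} {x : ι → ℝ} (hx : x ∈ stdSimplex ℝ ι)
    {M : ℝ} (hM : ‖lam x‖ ≤ M) : ‖replicatorField lam x‖ ≤ 2 * M := by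
  have hlam : ∀ i, |lam x i| ≤ M := fun i => (norm_le_pi_norm (lam x) i).trans hM
  refine (pi_norm_le_iff_of_nonneg (by linarith [(norm_nonneg _).trans hM])).2 fun ℓ => ?_
  obtain ⟨hx0, hx1⟩ := mem_Icc_of_mem_stdSimplex hx ℓ
  rw [Real.norm_eq_abs, replicatorField, abs_mul, abs_of_nonneg hx0, two_mul]
  calc x ℓ * |lam x ℓ - ∑ k, lam x k * x k| ≤ 1 * (M + M) := by
        gcongr
        exact (abs_sub _ _).trans (add_le_add (hlam ℓ) (abs_sum_mul_le_of_mem_stdSimplex hx hlam))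
    _ = M + M := one_mul _

theorem sum_mul_log_le_relativeEntropy {p q : ι → ℝ} (hp : ∀ i, 0 ≤ p i)
    (hq : q ∈ stdSimplex ℝ ι) : ∑ i, p i * log (p i) ≤ relativeEntropy p q :=
  Finset.sum_le_sum fun i _ => by
    have := log_nonpos (hq.1 i) (mem_Icc_of_mem_stdSimplex hq i).2
    nlinarith [hp i]

theorem hasDerivWithinAt_relativeEntropy {p : ι → ℝ} {q : ℝ → ι → ℝ} {q' : ι → ℝ} {s : Set ℝ}
    {t : ℝ} (hq : HasDerivWithinAt q q' s t) (hq0 : ∀ i, q t i ≠ 0) :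
    HasDerivWithinAt (fun t => relativeEntropy p (q t)) (-∑ i, p i * (q' i / q t i)) s t := by
  rw [← Finset.sum_neg_distrib]
  refine HasDerivWithinAt.fun_sum fun i _ => ?_
  have := (((hasDerivWithinAt_pi.1 hq i).log (hq0 i)).const_sub (log (p i))).const_mul (p i)
  simpa [mul_neg] using this

theorem hasDerivWithinAt_relativeEntropy_replicator {lam : (ι → ℝ) → ι → ℝ} {p : ι → ℝ}
    (hp : ∑ i, p i = 1) {B : ℝ → ι → ℝ} {s : Set ℝ} {t : ℝ}
    (hB : HasDerivWithinAt B (replicatorField lam (B t)) s t) (hB0 : ∀ i, B t i ≠ 0) :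
    HasDerivWithinAt (fun t => relativeEntropy p (B t))
      (∑ i, (B t i - p i) * lam (B t) i) s t := by
  convert hasDerivWithinAt_relativeEntropy hB hB0 using 1
  set c := ∑ k, lam (B t) k * B t k
  have hcancel : ∀ i, replicatorField lam (B t) i / B t i = lam (B t) i - c :=
    fun i => mul_div_cancel_left₀ _ (hB0 i)
  calc ∑ i, (B t i - p i) * lam (B t) i = c * ∑ i, p i - ∑ i, p i * lam (B t) i := by
        rw [hp, mul_one, ← Finset.sum_sub_distrib]
        exact Finset.sum_congr rfl fun i _ => by ring
    _ = -∑ i, p i * (replicatorField lam (B t) i / B t i) := by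
        simp only [hcancel, Finset.mul_sum, ← Finset.sum_sub_distrib, ← Finset.sum_neg_distrib]
        exact Finset.sum_congr rfl fun i _ => by ring

theorem sum_sub_mul_neg_of_sum_sub_mul_sub_neg {x y v w : ι → ℝ}
    (hmono : ∑ i, (x i - y i) * (v i - w i) < 0) (heq : ∑ i, x i * w i ≤ ∑ i, y i * w i) :
    ∑ i, (x i - y i) * v i < 0 := by
  have : ∑ i, (x i - y i) * v i
      = ∑ i, (x i - y i) * (v i - w i) + (∑ i, x i * w i - ∑ i, y i * w i) := by
    simp only [← Finset.sum_sub_distrib, ← Finset.sum_add_distrib]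
    exact Finset.sum_congr rfl fun i _ => by ring
  linarith

end Replicator

/-- Convergence of replicator-equation trajectories started in the interior of the unit
simplex `S` to the unique equilibrium `B*`, when `λ̄` is continuous on `S` and satisfies
the monotonicity condition on `S`. -/
theorem replicator_converges_to_equilibrium
    (L : ℕ)
    (S : Set (Fin L → ℝ))
    (hSdef : S = {x : Fin L → ℝ | (∀ ℓ, 0 ≤ x ℓ) ∧ ∑ ℓ, x ℓ = 1})
    (lam : (Fin L → ℝ) → (Fin L → ℝ)) (hlam : ContinuousOn lam S)
    (hmono : ∀ B ∈ S, ∀ Bh ∈ S, B ≠ Bh →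
      ∑ i, (B i - Bh i) * (lam B i - lam Bh i) < 0)
    (Bstar : Fin L → ℝ) (hBstar : Bstar ∈ S)
    (heq : ∀ x ∈ S, ∑ i, x i * lam Bstar i ≤ ∑ i, Bstar i * lam Bstar i)
    (B : ℝ → Fin L → ℝ)
    (hode : ∀ t ∈ Set.Ici (0 : ℝ), ∀ ℓ, HasDerivWithinAt (fun s => B s ℓ)
      (B t ℓ * (lam (B t) ℓ - ∑ k, lam (B t) k * B t k)) (Set.Ici 0) t)
    (hmem : ∀ t ∈ Set.Ici (0 : ℝ), B t ∈ S)
    (hpos : ∀ t ∈ Set.Ici (0 : ℝ), ∀ ℓ, 0 < B t ℓ) :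
    Filter.Tendsto B Filter.atTop (nhds Bstar) := by
  obtain rfl : S = stdSimplex ℝ (Fin L) := hSdef
  have hB : ∀ t ∈ Ici (0 : ℝ), HasDerivWithinAt B (replicatorField lam (B t)) (Ici 0) t :=
    fun t ht => hasDerivWithinAt_pi.2 (hode t ht)
  obtain ⟨M, hM⟩ := (isCompact_stdSimplex ℝ (Fin L)).exists_bound_of_continuousOn hlam
  refine tendsto_of_hasDerivWithinAt_lyapunov (isCompact_stdSimplex ℝ (Fin L))
    (F := fun x => ∑ i, (x i - Bstar i) * lam x i) (V := fun t => relativeEntropy Bstar (B t))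
    ?_ (by simp) (fun x hx hne => sum_sub_mul_neg_of_sum_sub_mul_sub_neg
      (hmono x hx Bstar hBstar hne) (heq x hx)) hmem
    (uniformContinuousOn_of_hasDerivWithinAt_of_norm_le (convex_Ici 0) hB
      fun t ht => norm_replicatorField_le (hmem t ht) (hM _ (hmem t ht)))
    (fun t ht => hasDerivWithinAt_relativeEntropy_replicator hBstar.2 (hB t ht)
      fun i => (hpos t ht i).ne')
    ⟨∑ i, Bstar i * log (Bstar i), by
      rintro _ ⟨t, ht, rfl⟩; exact sum_mul_log_le_relativeEntropy hBstar.1 (hmem t ht)⟩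
  fun_prop (disch := assumption)
end

section
/- Let D : ℝ^m → ℝ be concave and continuously differentiable, and suppose D attains its maximum over ℝ^m at a unique point λ*. Let λ : [0,∞) → ℝ^m be differentiable, satisfy the gradient-flow ODE λ'(t) = ∇D(λ(t)) for all t ≥ 0, and have bounded range. Then λ(t) → λ* as t → ∞. (This is the paper's lemma that the ODE λ̇ = ∇_λ D(λ) converges to λ*, the solution of the dual problem max_{λ} D(λ), and hence that the price iterations converge to the optimal link prices.) -/
/-!
For any reference point `z`, concavity makes
`E(t) = t * (D z - D (l t)) + ‖l t - z‖² / 2` nonincreasing along the gradient flow.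
With `z = λ*` this keeps the trajectory in the ball of radius `‖l 0 - λ*‖` about `λ*` and gives
`D (l t) ≥ D λ* - ‖l 0 - λ*‖² / (2t)`. Hence every cluster point of the trajectory maximizes `D`,
so it is `λ*`, and by compactness of the ball the trajectory converges to `λ*`.
-/

open Filter Set Topology
open scoped RealInnerProductSpace

section GradientFlow

variable {F : Type*} [NormedAddCommGroup F] [InnerProductSpace ℝ F] [CompleteSpace F]

theorem HasGradientAt.comp_hasDerivAt {D : F → ℝ} {g : F} {l : ℝ → F} {v : F} {t : ℝ}
    (hD : HasGradientAt D g (l t)) (hl : HasDerivAt l v t) :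
    HasDerivAt (fun s => D (l s)) ⟪g, v⟫ t :=
  (hasGradientAt_iff_hasFDerivAt.mp hD).comp_hasDerivAt t hl

theorem ConcaveOn.le_add_inner_of_hasGradientAt {D : F → ℝ} {g x : F}
    (hD : ConcaveOn ℝ univ D) (hg : HasGradientAt D g x) (y : F) :
    D y ≤ D x + ⟪g, y - x⟫ := by
  have hline : ConcaveOn ℝ univ (D ∘ AffineMap.lineMap (k := ℝ) x y) := by
    simpa using hD.comp_affineMap (AffineMap.lineMap x y)
  have hderiv : HasDerivAt (D ∘ AffineMap.lineMap (k := ℝ) x y) ⟪g, y - x⟫ 0 :=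
    (by simpa using hg : HasGradientAt D g (AffineMap.lineMap x y (0 : ℝ))).comp_hasDerivAt
      AffineMap.hasDerivAt_lineMap
  have hslope : slope (D ∘ AffineMap.lineMap (k := ℝ) x y) 0 1 = D y - D x := by simp [slope]
  have hle := hline.slope_le_of_hasDerivAt (mem_univ 0) (mem_univ 1) zero_lt_one hderiv
  linarith

variable {D : F → ℝ} {l : ℝ → F}

theorem ConcaveOn.gradient_flow_lyapunov_le (hD : ConcaveOn ℝ univ D) (hd : Differentiable ℝ D)
    (hode : ∀ t ∈ Ici (0 : ℝ), HasDerivAt l (gradient D (l t)) t) (z : F) {t : ℝ} (ht : 0 ≤ t) :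
    t * (D z - D (l t)) + ‖l t - z‖ ^ 2 / 2 ≤ ‖l 0 - z‖ ^ 2 / 2 := by
  set E : ℝ → ℝ := fun s => s * (D z - D (l s)) + ‖l s - z‖ ^ 2 / 2
  set E' : ℝ → ℝ := fun s =>
    (D z - D (l s)) - s * ‖gradient D (l s)‖ ^ 2 + ⟪l s - z, gradient D (l s)⟫
  have hE : ∀ s ∈ Ici (0 : ℝ), HasDerivAt E (E' s) s := by
    intro s hs
    have hDl := (hd (l s)).hasGradientAt.comp_hasDerivAt (hode s hs)
    have hsum := ((hasDerivAt_id s).mul (hDl.const_sub (D z))).add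
      (((hode s hs).sub_const z).norm_sq.div_const 2)
    refine hsum.congr_deriv ?_
    simp only [E', id, real_inner_self_eq_norm_sq]
    ring
  have hE' : ∀ s ∈ Ici (0 : ℝ), E' s ≤ 0 := by
    intro s hs
    have hconcave := hD.le_add_inner_of_hasGradientAt (hd (l s)).hasGradientAt z
    have hinner : ⟪l s - z, gradient D (l s)⟫ = -⟪gradient D (l s), z - l s⟫ := by
      rw [real_inner_comm, ← inner_neg_right, neg_sub]
    have hdissip : 0 ≤ s * ‖gradient D (l s)‖ ^ 2 := mul_nonneg hs (sq_nonneg _)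
    simp only [E']
    linarith
  have hanti : AntitoneOn E (Ici 0) :=
    antitoneOn_of_hasDerivWithinAt_nonpos (convex_Ici 0)
      (fun s hs => (hE s hs).continuousAt.continuousWithinAt)
      (fun s hs => (hE s (interior_subset hs)).hasDerivWithinAt)
      (fun s hs => hE' s (interior_subset hs))
  simpa [E] using hanti self_mem_Ici ht ht

theorem ConcaveOn.dist_gradient_flow_le (hD : ConcaveOn ℝ univ D) (hd : Differentiable ℝ D)
    (hode : ∀ t ∈ Ici (0 : ℝ), HasDerivAt l (gradient D (l t)) t) {z : F}
    (hz : ∀ x, D x ≤ D z) {t : ℝ} (ht : 0 ≤ t) : dist (l t) z ≤ dist (l 0) z := by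
  have hgap : 0 ≤ t * (D z - D (l t)) := mul_nonneg ht (sub_nonneg.mpr (hz _))
  have hlyap := hD.gradient_flow_lyapunov_le hd hode z ht
  rw [dist_eq_norm, dist_eq_norm]
  nlinarith [norm_nonneg (l t - z), norm_nonneg (l 0 - z)]

theorem ConcaveOn.tendsto_gradient_flow_value (hD : ConcaveOn ℝ univ D) (hd : Differentiable ℝ D)
    (hode : ∀ t ∈ Ici (0 : ℝ), HasDerivAt l (gradient D (l t)) t) {z : F}
    (hz : ∀ x, D x ≤ D z) : Tendsto (fun t => D (l t)) atTop (𝓝 (D z)) := by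
  have hlower : ∀ᶠ t in atTop, D z - ‖l 0 - z‖ ^ 2 / 2 / t ≤ D (l t) := by
    filter_upwards [eventually_gt_atTop 0] with t ht
    have hlyap := hD.gradient_flow_lyapunov_le hd hode z ht.le
    rw [sub_le_comm, le_div_iff₀ ht, mul_comm]
    linarith [sq_nonneg ‖l t - z‖]
  have hbound : Tendsto (fun t : ℝ => D z - ‖l 0 - z‖ ^ 2 / 2 / t) atTop (𝓝 (D z)) := by
    simpa using (tendsto_const_nhds (x := D z)).sub (tendsto_const_nhds.div_atTop tendsto_id)
  exact tendsto_of_tendsto_of_tendsto_of_le_of_le' hbound tendsto_const_nhds hlower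
    (Eventually.of_forall fun t => hz (l t))

end GradientFlow

theorem IsCompact.tendsto_of_tendsto_comp_of_unique_preimage {X Y ι : Type*}
    [TopologicalSpace X] [TopologicalSpace Y] [T2Space Y] {K : Set X} (hK : IsCompact K)
    {f : X → Y} (hf : Continuous f) {L : Filter ι} {u : ι → X} {x : X}
    (hu : ∀ᶠ i in L, u i ∈ K) (hfu : Tendsto (fun i => f (u i)) L (𝓝 (f x)))
    (hx : ∀ y ∈ K, f y = f x → y = x) : Tendsto u L (𝓝 x) :=
  hK.tendsto_nhds_of_unique_mapClusterPt hu fun y hyK hy =>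
    hx y hyK (eq_of_nhds_neBot ((hy.continuousAt_comp hf.continuousAt).clusterPt.mono hfu))

theorem gradient_flow_converges_to_unique_maximizer_general
    (m : ℕ) (D : EuclideanSpace ℝ (Fin m) → ℝ)
    (hconc : ConcaveOn ℝ Set.univ D) (hD : ContDiff ℝ 1 D)
    (lstar : EuclideanSpace ℝ (Fin m))
    (hmax : ∀ x, D x ≤ D lstar)
    (huniq : ∀ y, (∀ x, D x ≤ D y) → y = lstar)
    (l : ℝ → EuclideanSpace ℝ (Fin m))
    (hode : ∀ t ∈ Set.Ici (0 : ℝ), HasDerivAt l (gradient D (l t)) t) :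
    Tendsto l atTop (nhds lstar) := by
  have hd : Differentiable ℝ D := hD.differentiable one_ne_zero
  have hball : ∀ᶠ t in atTop, l t ∈ Metric.closedBall lstar (dist (l 0) lstar) :=
    (eventually_ge_atTop 0).mono fun t ht => hconc.dist_gradient_flow_le hd hode hmax ht
  refine (isCompact_closedBall _ _).tendsto_of_tendsto_comp_of_unique_preimage hd.continuous hball
    (hconc.tendsto_gradient_flow_value hd hode hmax) fun y _ hy => huniq y fun x => ?_
  exact hy ▸ hmax x

/-- Convergence of the gradient flow for a concave, continuously differentiable dual
function `D` with a unique maximizer `λ*`: any bounded trajectory of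
`λ'(t) = ∇D(λ(t))` converges to `λ*`. -/
theorem gradient_flow_converges_to_unique_maximizer
    (m : ℕ) (D : EuclideanSpace ℝ (Fin m) → ℝ)
    (hconc : ConcaveOn ℝ Set.univ D) (hD : ContDiff ℝ 1 D)
    (lstar : EuclideanSpace ℝ (Fin m))
    (hmax : ∀ x, D x ≤ D lstar)
    (huniq : ∀ y, (∀ x, D x ≤ D y) → y = lstar)
    (l : ℝ → EuclideanSpace ℝ (Fin m))
    (hode : ∀ t ∈ Set.Ici (0 : ℝ), HasDerivAt l (gradient D (l t)) t)
    (hbdd : Bornology.IsBounded (Set.range l)) :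
    Tendsto l atTop (nhds lstar) :=
  gradient_flow_converges_to_unique_maximizer_general m D hconc hD lstar hmax huniq l hode
end
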